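/- arXiv:1507.02782 — 2 statements merged into one kernel-verified Lean document; each statement's English description precedes it below -/
import Mathlib

section
/- Let α, β ∈ ℝ with (α,β) ≠ (0,0), and let H = {diag(e^s, e^t, e^{αs+βt}) : s,t ∈ ℝ} act on ℝ³ by matrix multiplication. Let 𝒪₂ = {v ∈ ℝ³ : the only (s,t) ∈ ℝ² with (e^s v₁, e^t v₂, e^{αs+βt} v₃) = v is (0,0)} be the set of points with trivial stabilizer. Then the following are equivalent: (i) the orbit space 𝒪₂/H is compact; (ii) 𝒪₂/H contains a compact open subset whose preimage under the quotient map 𝒪₂ → 𝒪₂/H is conull in ℝ³ for Lebesgue measure; (iii) at least one of α, β is strictly positive. -/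
open MeasureTheory Set
open scoped Real

noncomputable section

/-- The action of `(s,t) ∈ ℝ²` (i.e. of `diag(e^s, e^t, e^{αs+βt}) ∈ H`) on `ℝ³`. -/
def act (α β : ℝ) (p : ℝ × ℝ) (v : Fin 3 → ℝ) : Fin 3 → ℝ :=
  ![Real.exp p.1 * v 0, Real.exp p.2 * v 1, Real.exp (α * p.1 + β * p.2) * v 2]

/-- The set `𝒪₂` of points of `ℝ³` with trivial stabilizer under the action of `H`. -/
def freeSet (α β : ℝ) : Set (Fin 3 → ℝ) :=
  {v | ∀ p : ℝ × ℝ, act α β p v = v → p = 0}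

/-- The orbit equivalence relation on `𝒪₂`; `Quot (orbitRel α β)` is the orbit space
`𝒪₂/H` with the quotient topology. -/
def orbitRel (α β : ℝ) (x y : ↥(freeSet α β)) : Prop :=
  ∃ p : ℝ × ℝ, act α β p (x : Fin 3 → ℝ) = (y : Fin 3 → ℝ)

/-!
The stabilizer of `v` is cut out by the weights `s`, `t`, `αs + βt` of its nonzero
coordinates, so `v ∈ 𝒪₂` iff two of its nonzero coordinates carry independent weights.

If `α > 0`, every orbit in `𝒪₂` meets the compact set of points of the unit cube having two
independently weighted coordinates of absolute value one: normalise `|v₁|` (or both nonzero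
coordinates when `v₀ v₁ = 0`), then take `s` as large as `|v₀|, |v₂| ≤ 1` allows. This compact
subset of `𝒪₂` maps onto `𝒪₂/H`. The case `β > 0` follows by exchanging the first two coordinates.

If `α, β ≤ 0`, the invariant `v₂ |v₀|^{-α} |v₁|^{-β}` is continuous on all of `ℝ³`, hence bounded
on the preimage of a compact `K ⊆ 𝒪₂/H`, which therefore misses a nonempty open set. Conversely
`ℝ³ \ 𝒪₂` lies in two coordinate planes, so `K = 𝒪₂/H` works when `𝒪₂/H` is compact.
-/

theorem exists_exp_mul_abs_eq_one {x : ℝ} (hx : x ≠ 0) : ∃ s, Real.exp s * |x| = 1 :=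
  ⟨-Real.log |x|, by
    rw [Real.exp_neg, Real.exp_log (abs_pos.2 hx), inv_mul_cancel₀ (abs_ne_zero.2 hx)]⟩

theorem exists_exp_add_mul_mul_abs_eq_one (a : ℝ) {c x : ℝ} (hc : c ≠ 0) (hx : x ≠ 0) :
    ∃ t, Real.exp (a + c * t) * |x| = 1 := by
  obtain ⟨r, hr⟩ := exists_exp_mul_abs_eq_one hx
  exact ⟨(r - a) / c, by rwa [mul_div_cancel₀ _ hc, add_sub_cancel]⟩

theorem exists_exp_mul_le_one_and_eq_one {x y c : ℝ} (hx : 0 < x) (hy : 0 ≤ y) (hc : 0 < c) :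
    ∃ s, Real.exp s * x ≤ 1 ∧ Real.exp (c * s) * y ≤ 1 ∧
      (Real.exp s * x = 1 ∨ Real.exp (c * s) * y = 1) := by
  have hx' (s : ℝ) : Real.exp s * x = Real.exp (s + Real.log x) := by
    rw [Real.exp_add, Real.exp_log hx]
  obtain rfl | hy := hy.eq_or_lt
  · exact ⟨-Real.log x, by simp [hx'], by simp, by simp [hx']⟩
  have hy' (s : ℝ) : Real.exp (c * s) * y = Real.exp (c * s + Real.log y) := by
    rw [Real.exp_add, Real.exp_log hy]
  set s := min (-Real.log x) (-Real.log y / c) with hs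
  have hcs : c * (-Real.log y / c) = -Real.log y := mul_div_cancel₀ _ hc.ne'
  refine ⟨s, ?_, ?_, ?_⟩ <;> simp only [hx', hy', Real.exp_le_one_iff, Real.exp_eq_one_iff]
  · linarith [min_le_left (-Real.log x) (-Real.log y / c)]
  · nlinarith [min_le_right (-Real.log x) (-Real.log y / c)]
  · rcases min_choice (-Real.log x) (-Real.log y / c) with h | h <;> rw [← hs] at h <;> rw [h]
    · exact Or.inl (neg_add_cancel _)
    · exact Or.inr (by rw [hcs, neg_add_cancel])

section

variable {α β : ℝ}

theorem act_eq_self_iff {p : ℝ × ℝ} {v : Fin 3 → ℝ} :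
    act α β p v = v ↔
      (p.1 = 0 ∨ v 0 = 0) ∧ (p.2 = 0 ∨ v 1 = 0) ∧ (α * p.1 + β * p.2 = 0 ∨ v 2 = 0) := by
  simp [act, funext_iff, Fin.forall_fin_succ, mul_left_eq_self₀, Real.exp_eq_one_iff]

theorem mem_freeSet_iff {v : Fin 3 → ℝ} :
    v ∈ freeSet α β ↔
      v 0 ≠ 0 ∧ v 1 ≠ 0 ∨ β ≠ 0 ∧ v 0 ≠ 0 ∧ v 2 ≠ 0 ∨ α ≠ 0 ∧ v 1 ≠ 0 ∧ v 2 ≠ 0 := by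
  constructor
  · intro hv
    have h₁ := hv (1, 0)
    have h₂ := hv (0, 1)
    have h₃ := hv (β, -α)
    simp only [act_eq_self_iff, Prod.ext_iff, Prod.fst_zero, Prod.snd_zero, mul_one, mul_zero,
      add_zero, zero_add, mul_neg, mul_comm β α, add_neg_cancel, neg_eq_zero, one_ne_zero]
      at h₁ h₂ h₃
    tauto
  · rintro (⟨h0, h1⟩ | ⟨hβ, h0, h2⟩ | ⟨hα, h1, h2⟩) p hp <;>
      obtain ⟨hp0, hp1, hp2⟩ := act_eq_self_iff.1 hp <;> simp_all [Prod.ext_iff]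

@[simp]
theorem abs_act_apply_zero (p : ℝ × ℝ) (v : Fin 3 → ℝ) :
    |act α β p v 0| = Real.exp p.1 * |v 0| := by
  simp [act, abs_mul]

@[simp]
theorem abs_act_apply_one (p : ℝ × ℝ) (v : Fin 3 → ℝ) :
    |act α β p v 1| = Real.exp p.2 * |v 1| := by
  simp [act, abs_mul]

@[simp]
theorem abs_act_apply_two (p : ℝ × ℝ) (v : Fin 3 → ℝ) :
    |act α β p v 2| = Real.exp (α * p.1 + β * p.2) * |v 2| := by
  simp [act, abs_mul]

def normalizedSet (α β : ℝ) : Set (Fin 3 → ℝ) :=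
  {v | |v 0| ≤ 1 ∧ |v 1| ≤ 1 ∧ |v 2| ≤ 1 ∧
    (|v 0| = 1 ∧ |v 1| = 1 ∨ β ≠ 0 ∧ |v 0| = 1 ∧ |v 2| = 1 ∨ α ≠ 0 ∧ |v 1| = 1 ∧ |v 2| = 1)}

theorem normalizedSet_subset_freeSet : normalizedSet α β ⊆ freeSet α β := by
  intro v hv
  have (i : Fin 3) (h : |v i| = 1) : v i ≠ 0 := by rintro h'; simp [h'] at h
  rw [mem_freeSet_iff]
  obtain ⟨-, -, -, h⟩ := hv
  tauto

theorem isCompact_normalizedSet : IsCompact (normalizedSet α β) := by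
  refine Metric.isCompact_of_isClosed_isBounded ?_ ?_
  · have hc (i : Fin 3) : Continuous fun v : Fin 3 → ℝ => |v i| := (continuous_apply i).abs
    simp only [normalizedSet, ofPred_and, ofPred_or]
    apply_rules [IsClosed.inter, IsClosed.union, isClosed_le, isClosed_eq, isClosed_const,
      continuous_const]
  · refine (Metric.isBounded_closedBall (x := 0) (r := 1)).subset fun v hv => ?_
    obtain ⟨h0, h1, h2, -⟩ := hv
    simp [pi_norm_le_iff_of_nonneg, Fin.forall_fin_succ, *]

theorem exists_act_mem_normalizedSet_of_pos_left (hα : 0 < α) {v : Fin 3 → ℝ}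
    (hv : v ∈ freeSet α β) : ∃ p, act α β p v ∈ normalizedSet α β := by
  by_cases h01 : v 0 ≠ 0 ∧ v 1 ≠ 0
  · obtain ⟨t, ht⟩ := exists_exp_mul_abs_eq_one h01.2
    obtain ⟨s, hs0, hs2, hs⟩ := exists_exp_mul_le_one_and_eq_one (abs_pos.2 h01.1)
      (y := Real.exp (β * t) * |v 2|) (by positivity) hα
    have h2 : Real.exp (α * s + β * t) * |v 2| = Real.exp (α * s) * (Real.exp (β * t) * |v 2|) := by
      rw [Real.exp_add, mul_assoc]
    refine ⟨(s, t), ?_⟩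
    simp only [normalizedSet, mem_ofPred_eq, abs_act_apply_zero, abs_act_apply_one,
      abs_act_apply_two, h2, ht]
    refine ⟨hs0, le_rfl, hs2, ?_⟩
    rcases hs with h | h
    · exact Or.inl ⟨h, trivial⟩
    · exact Or.inr (Or.inr ⟨hα.ne', trivial, h⟩)
  · rcases mem_freeSet_iff.1 hv with h | ⟨hβ, h0, h2⟩ | ⟨-, h1, h2⟩
    · exact absurd h h01
    · have h1 : v 1 = 0 := by tauto
      obtain ⟨s, hs⟩ := exists_exp_mul_abs_eq_one h0
      obtain ⟨t, ht⟩ := exists_exp_add_mul_mul_abs_eq_one (α * s) hβ h2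
      exact ⟨(s, t), by simp [normalizedSet, h1, hs, ht, hβ]⟩
    · have h0 : v 0 = 0 := by tauto
      obtain ⟨t, ht⟩ := exists_exp_mul_abs_eq_one h1
      obtain ⟨s, hs⟩ := exists_exp_add_mul_mul_abs_eq_one (β * t) hα.ne' h2
      exact ⟨(s, t), by simp [normalizedSet, h0, ht, add_comm (α * s), hs, hα.ne']⟩

def swapCoords (v : Fin 3 → ℝ) : Fin 3 → ℝ := ![v 1, v 0, v 2]

theorem swapCoords_act (p : ℝ × ℝ) (v : Fin 3 → ℝ) :
    swapCoords (act α β p v) = act β α p.swap (swapCoords v) := by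
  ext i; fin_cases i <;> simp [swapCoords, act, add_comm]

theorem swapCoords_mem_freeSet_iff {v : Fin 3 → ℝ} :
    swapCoords v ∈ freeSet β α ↔ v ∈ freeSet α β := by
  simp only [swapCoords, mem_freeSet_iff, Matrix.cons_val]
  tauto

theorem swapCoords_mem_normalizedSet_iff {v : Fin 3 → ℝ} :
    swapCoords v ∈ normalizedSet β α ↔ v ∈ normalizedSet α β := by
  simp only [normalizedSet, swapCoords, mem_ofPred_eq, Matrix.cons_val]
  tauto

theorem exists_act_mem_normalizedSet (h : 0 < α ∨ 0 < β) {v : Fin 3 → ℝ}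
    (hv : v ∈ freeSet α β) : ∃ p, act α β p v ∈ normalizedSet α β := by
  rcases h with hα | hβ
  · exact exists_act_mem_normalizedSet_of_pos_left hα hv
  · obtain ⟨p, hp⟩ :=
      exists_act_mem_normalizedSet_of_pos_left hβ (swapCoords_mem_freeSet_iff.2 hv)
    refine ⟨p.swap, swapCoords_mem_normalizedSet_iff.1 ?_⟩
    rwa [swapCoords_act, Prod.swap_swap]

theorem compactSpace_orbitSpace_of_pos (h : 0 < α ∨ 0 < β) :
    CompactSpace (Quot (orbitRel α β)) := by
  have hK : IsCompact (Subtype.val ⁻¹' normalizedSet α β : Set (freeSet α β)) := by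
    rw [Topology.IsEmbedding.subtypeVal.isCompact_iff, Subtype.image_preimage_coe,
      inter_eq_self_of_subset_right normalizedSet_subset_freeSet]
    exact isCompact_normalizedSet
  have hsurj : Quot.mk (orbitRel α β) '' (Subtype.val ⁻¹' normalizedSet α β) = univ := by
    refine eq_univ_of_forall fun q => ?_
    obtain ⟨x, rfl⟩ := Quot.exists_rep q
    obtain ⟨p, hp⟩ := exists_act_mem_normalizedSet h x.2
    exact ⟨⟨_, normalizedSet_subset_freeSet hp⟩, hp, (Quot.sound ⟨p, rfl⟩).symm⟩
  exact ⟨hsurj ▸ hK.image continuous_quot_mk⟩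

theorem volume_compl_freeSet : volume (freeSet α β)ᶜ = 0 := by
  let coord (i : Fin 3) : (Fin 3 → ℝ) →ₗ[ℝ] ℝ := LinearMap.proj i
  have hker (i : Fin 3) : LinearMap.ker (coord i) ≠ ⊤ := fun h => by
    simpa [coord] using LinearMap.congr_fun (LinearMap.ker_eq_top.1 h) (Pi.single i 1)
  have hsub : (freeSet α β)ᶜ ⊆ (LinearMap.ker (coord 0) : Set _) ∪ LinearMap.ker (coord 1) := by
    intro v hv
    by_contra h
    simp only [mem_union, SetLike.mem_coe, LinearMap.mem_ker, not_or] at h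
    exact hv (mem_freeSet_iff.2 (Or.inl h))
  exact measure_mono_null hsub <| measure_union_null
    (Measure.addHaar_submodule _ _ (hker 0)) (Measure.addHaar_submodule _ _ (hker 1))

def orbitInvariant (α β : ℝ) (v : Fin 3 → ℝ) : ℝ := v 2 * |v 0| ^ (-α) * |v 1| ^ (-β)

theorem continuous_orbitInvariant (hα : α ≤ 0) (hβ : β ≤ 0) :
    Continuous (orbitInvariant α β) := by
  have (i : Fin 3) {γ : ℝ} (hγ : γ ≤ 0) : Continuous fun v : Fin 3 → ℝ => |v i| ^ (-γ) :=
    (continuous_apply i).abs.rpow_const fun _ => Or.inr (neg_nonneg.2 hγ)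
  exact ((continuous_apply 2).mul (this 0 hα)).mul (this 1 hβ)

theorem orbitInvariant_act (p : ℝ × ℝ) (v : Fin 3 → ℝ) :
    orbitInvariant α β (act α β p v) = orbitInvariant α β v := by
  have h : Real.exp (α * p.1 + β * p.2) * Real.exp (p.1 * -α) * Real.exp (p.2 * -β) = 1 := by
    rw [← Real.exp_add, ← Real.exp_add, Real.exp_eq_one_iff]
    ring
  simp only [orbitInvariant, act, Matrix.cons_val,
    abs_mul, Real.abs_exp, Real.mul_rpow (Real.exp_pos _).le (abs_nonneg _), ← Real.exp_mul]
  linear_combination (v 2 * |v 0| ^ (-α) * |v 1| ^ (-β)) * h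

theorem volume_compl_preimage_ne_zero (hα : α ≤ 0) (hβ : β ≤ 0) {K : Set (Quot (orbitRel α β))}
    (hK : IsCompact K) :
    volume {v : Fin 3 → ℝ | ∃ hv : v ∈ freeSet α β, Quot.mk (orbitRel α β) ⟨v, hv⟩ ∈ K}ᶜ ≠ 0 := by
  let G : Quot (orbitRel α β) → ℝ := Quot.lift (fun x => orbitInvariant α β x.1) <| by
    rintro x y ⟨p, hp⟩
    rw [← hp, orbitInvariant_act]
  have hG : Continuous G :=
    continuous_quot_lift _ ((continuous_orbitInvariant hα hβ).comp continuous_subtype_val)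
  obtain ⟨M, hM⟩ := hK.bddAbove_image hG.continuousOn
  have hU : IsOpen {v | M < orbitInvariant α β v} :=
    isOpen_lt continuous_const (continuous_orbitInvariant hα hβ)
  have hsub : {v | M < orbitInvariant α β v} ⊆
      {v | ∃ hv : v ∈ freeSet α β, Quot.mk (orbitRel α β) ⟨v, hv⟩ ∈ K}ᶜ := by
    rintro v hvM ⟨hv, hvK⟩
    exact (hM ⟨_, hvK, rfl⟩).not_gt hvM
  have hU_ne : ({v | M < orbitInvariant α β v} : Set (Fin 3 → ℝ)).Nonempty :=
    ⟨![1, 1, M + 1], by simp [orbitInvariant]⟩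
  exact fun hnull => (hU.measure_pos volume hU_ne).ne' (measure_mono_null hsub hnull)

end

theorem compact_orbitSpace_iff_pos_general
    (α β : ℝ) :
    (CompactSpace (Quot (orbitRel α β)) ↔ (0 < α ∨ 0 < β)) ∧
    ((∃ K : Set (Quot (orbitRel α β)), IsCompact K ∧ IsOpen K ∧
        volume {v : Fin 3 → ℝ |
          ∃ hv : v ∈ freeSet α β, Quot.mk (orbitRel α β) ⟨v, hv⟩ ∈ K}ᶜ = 0) ↔
      (0 < α ∨ 0 < β)) := by
  have pos_of_conull : (∃ K : Set (Quot (orbitRel α β)), IsCompact K ∧ IsOpen K ∧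
      volume {v : Fin 3 → ℝ |
        ∃ hv : v ∈ freeSet α β, Quot.mk (orbitRel α β) ⟨v, hv⟩ ∈ K}ᶜ = 0) →
      0 < α ∨ 0 < β := by
    rintro ⟨K, hK, -, hnull⟩
    by_contra! h
    exact volume_compl_preimage_ne_zero h.1 h.2 hK hnull
  have conull_of_compact (h : CompactSpace (Quot (orbitRel α β))) :
      ∃ K : Set (Quot (orbitRel α β)), IsCompact K ∧ IsOpen K ∧
        volume {v : Fin 3 → ℝ |
          ∃ hv : v ∈ freeSet α β, Quot.mk (orbitRel α β) ⟨v, hv⟩ ∈ K}ᶜ = 0 :=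
    ⟨univ, h.isCompact_univ, isOpen_univ, by simpa using volume_compl_freeSet⟩
  exact ⟨⟨fun h => pos_of_conull (conull_of_compact h), compactSpace_orbitSpace_of_pos⟩,
    ⟨pos_of_conull, fun h => conull_of_compact (compactSpace_orbitSpace_of_pos h)⟩⟩

/-- For `H = {diag(e^s, e^t, e^{αs+βt})}` with `(α,β) ≠ (0,0)`, the
following are equivalent: (i) `𝒪₂/H` is compact; (ii) `𝒪₂/H` contains a compact open
subset with conull preimage in `ℝ³`; (iii) `0 < α` or `0 < β`. -/
theorem compact_orbitSpace_iff_pos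
    (α β : ℝ) (hαβ : (α, β) ≠ (0, 0)) :
    (CompactSpace (Quot (orbitRel α β)) ↔ (0 < α ∨ 0 < β)) ∧
    ((∃ K : Set (Quot (orbitRel α β)), IsCompact K ∧ IsOpen K ∧
        volume {v : Fin 3 → ℝ |
          ∃ hv : v ∈ freeSet α β, Quot.mk (orbitRel α β) ⟨v, hv⟩ ∈ K}ᶜ = 0) ↔
      (0 < α ∨ 0 < β)) :=
  compact_orbitSpace_iff_pos_general α β
end
end

section
/- Let α, β ∈ ℝ with αβ ≠ 0 and at least one of α, β strictly positive, and let H = {diag(e^s, e^t, e^{αs+βt}) : s,t ∈ ℝ} act on ℝ³. Let 𝒪₂ = {v ∈ ℝ³ : at least two of the coordinates v₁, v₂, v₃ are nonzero}. Then there exists no topological quasi-section for the H-action on 𝒪₂; in particular, there exists no topological section for 𝒪₂. -/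
/-!
The action of `H` on `𝒪₂` is not proper, while a quasi-section or a section would make it proper.
Take `d ∈ ℝ²` whose weight vector `λ = (d₁, d₂, αd₁ + βd₂)` has a zero entry and two entries of
opposite signs. The points `wₙ = (exp (n · min (-λᵢ) 0))ᵢ` of `𝒪₂` converge to the indicator of
`{λ ≤ 0}` and their translates `(n • d) wₙ = (exp (n · min λᵢ 0))ᵢ` to the indicator of `{λ ≥ 0}`,
both in `𝒪₂`, although `n • d → ∞`. Writing the two limits as `r c` and `r' c'` with `c, c' ∈ C`,
an open quasi-section `C` would contain `(-r) wₙ` and `(-r' + n • d) wₙ` for large `n`, putting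
the unbounded elements `-r' + n • d + r` into `((C, C))`. A section `C` gives a continuous
equivariant map `u ↦ (e⁻¹ u).1` from `𝒪₂` to `ℝ²`, which would force `n • d` to converge.
-/

open Set Topology
open scoped Real

noncomputable section

/-- `𝒪₂ = {v ∈ ℝ³ : at least two coordinates of v are nonzero}`. -/
def O2 : Set (Fin 3 → ℝ) :=
  {v | (v 0 ≠ 0 ∧ v 1 ≠ 0) ∨ (v 0 ≠ 0 ∧ v 2 ≠ 0) ∨ (v 1 ≠ 0 ∧ v 2 ≠ 0)}

/-- `C` is a topological quasi-section for the `H`-invariant set `U`: `C` is open,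
`HC = U`, and `((C,C)) = {h ∈ H : hC ∩ C ≠ ∅}` is relatively compact (identifying
`H ≅ ℝ²` via `(s,t) ↦ diag(e^s, e^t, e^{αs+βt})`). -/
def IsQuasiSection (α β : ℝ) (U C : Set (Fin 3 → ℝ)) : Prop :=
  IsOpen C ∧ C ⊆ U ∧ {v | ∃ p : ℝ × ℝ, ∃ c ∈ C, act α β p c = v} = U ∧
    IsCompact (closure {p : ℝ × ℝ | ∃ c ∈ C, act α β p c ∈ C})

/-- `C` is a topological section for the `H`-invariant set `U`: the map
`H × C → U, (h,c) ↦ hc` is a homeomorphism. -/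
def IsTopSection (α β : ℝ) (U C : Set (Fin 3 → ℝ)) : Prop :=
  C ⊆ U ∧ ∃ e : ((ℝ × ℝ) × ↥C) ≃ₜ ↥U,
    ∀ (p : ℝ × ℝ) (c : ↥C), ((e (p, c) : ↥U) : Fin 3 → ℝ) = act α β p (c : Fin 3 → ℝ)

open Filter

section Action

variable {α β : ℝ}

def weight (α β : ℝ) : ℝ × ℝ →ₗ[ℝ] Fin 3 → ℝ :=
  LinearMap.pi ![LinearMap.fst ℝ ℝ ℝ, LinearMap.snd ℝ ℝ ℝ,
    α • LinearMap.fst ℝ ℝ ℝ + β • LinearMap.snd ℝ ℝ ℝ]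

lemma act_apply (p : ℝ × ℝ) (v : Fin 3 → ℝ) (i : Fin 3) :
    act α β p v i = Real.exp (weight α β p i) * v i := by
  fin_cases i <;> rfl

lemma act_act (p q : ℝ × ℝ) (v : Fin 3 → ℝ) :
    act α β p (act α β q v) = act α β (p + q) v := by
  ext i
  simp only [act_apply, map_add, Pi.add_apply, Real.exp_add]
  ring

lemma act_zero (v : Fin 3 → ℝ) : act α β 0 v = v := by
  ext i
  simp [act_apply]

lemma continuous_act (p : ℝ × ℝ) : Continuous (act α β p) :=
  continuous_pi fun i => by simp only [act_apply]; fun_prop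

end Action

section NotProper

variable {α β : ℝ} {U C : Set (Fin 3 → ℝ)} {ι : Type*} {l : Filter ι} [l.NeBot]
  {w : ι → Fin 3 → ℝ} {q : ι → ℝ × ℝ} {v v' : Fin 3 → ℝ}

lemma not_isQuasiSection_of_tendsto (hv : v ∈ U) (hv' : v' ∈ U) (hw : Tendsto w l (𝓝 v))
    (hqw : Tendsto (fun i => act α β (q i) (w i)) l (𝓝 v'))
    (hq : Tendsto q l (cocompact (ℝ × ℝ))) : ¬ IsQuasiSection α β U C := by
  rintro ⟨hCopen, -, hHC, hcomp⟩
  rw [← hHC] at hv hv'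
  obtain ⟨r, c, hc, rfl⟩ := hv
  obtain ⟨r', c', hc', rfl⟩ := hv'
  have hback : ∀ (p : ℝ × ℝ) (u : Fin 3 → ℝ), act α β (-p) (act α β p u) = u := fun p u => by
    rw [act_act, neg_add_cancel, act_zero]
  have h1 : ∀ᶠ i in l, act α β (-r) (w i) ∈ C :=
    ((continuous_act _).tendsto _ |>.comp hw).eventually_mem
      (hCopen.mem_nhds (by rwa [hback]))
  have h2 : ∀ᶠ i in l, act α β (-r') (act α β (q i) (w i)) ∈ C :=
    ((continuous_act _).tendsto _ |>.comp hqw).eventually_mem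
      (hCopen.mem_nhds (by rwa [hback]))
  set S := {p : ℝ × ℝ | ∃ c ∈ C, act α β p c ∈ C}
  have hK : IsCompact ((fun p => r' + p - r) '' closure S) :=
    hcomp.image (by fun_prop)
  obtain ⟨i, hi1, hi2, hi3⟩ := (h1.and (h2.and (hq.eventually hK.compl_mem_cocompact))).exists
  refine hi3 ⟨-r' + q i + r, subset_closure ⟨_, hi1, ?_⟩, by abel_nf⟩
  rwa [act_act, add_neg_cancel_right, ← act_act]

lemma not_isTopSection_of_tendsto (hwU : ∀ i, w i ∈ U) (hqwU : ∀ i, act α β (q i) (w i) ∈ U)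
    (hv : v ∈ U) (hv' : v' ∈ U) (hw : Tendsto w l (𝓝 v))
    (hqw : Tendsto (fun i => act α β (q i) (w i)) l (𝓝 v'))
    (hq : Tendsto q l (cocompact (ℝ × ℝ))) : ¬ IsTopSection α β U C := by
  rintro ⟨-, e, he⟩
  set P : U → ℝ × ℝ := fun u => (e.symm u).1
  have hP : ∀ (u : U) (p : ℝ × ℝ) (hpu : act α β p u ∈ U), P ⟨_, hpu⟩ = p + P u := by
    intro u p hpu
    have : e (p + P u, (e.symm u).2) = ⟨_, hpu⟩ := by
      ext1
      rw [he, ← act_act, ← he, Prod.mk.eta, e.apply_symm_apply]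
    simp only [P, ← this, e.symm_apply_apply]
  have hPc : Continuous P := continuous_fst.comp e.symm.continuous
  have h1 : Tendsto (fun i => P ⟨w i, hwU i⟩) l (𝓝 (P ⟨v, hv⟩)) :=
    (hPc.tendsto _).comp (tendsto_subtype_rng.2 hw)
  have h2 : Tendsto (fun i => P ⟨_, hqwU i⟩) l (𝓝 (P ⟨v', hv'⟩)) :=
    (hPc.tendsto _).comp (tendsto_subtype_rng.2 hqw)
  have hlim : Tendsto q l (𝓝 (P ⟨v', hv'⟩ - P ⟨v, hv⟩)) :=
    (h2.sub h1).congr fun i => by simp [hP ⟨w i, hwU i⟩ (q i) (hqwU i)]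
  exact hlim.not_tendsto (disjoint_nhds_cocompact _) hq

end NotProper

lemma mem_O2_of_forall_ne_zero {v : Fin 3 → ℝ} (hv : ∀ i, v i ≠ 0) : v ∈ O2 :=
  Or.inl ⟨hv 0, hv 1⟩

lemma tendsto_exp_natCast_mul_min (c : ℝ) :
    Tendsto (fun n : ℕ => Real.exp (n * min c 0)) atTop (𝓝 (if 0 ≤ c then 1 else 0)) := by
  split_ifs with hc
  · simp [min_eq_right hc]
  · rw [min_eq_left (not_le.1 hc).le]
    exact Real.tendsto_exp_atBot.comp
      (tendsto_natCast_atTop_atTop.atTop_mul_const_of_neg (not_le.1 hc))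

theorem not_exists_section_O2_of_weight {α β : ℝ} (d : ℝ × ℝ) (hd : d ≠ 0)
    (hle : (fun i => if weight α β d i ≤ 0 then (1 : ℝ) else 0) ∈ O2)
    (hge : (fun i => if 0 ≤ weight α β d i then (1 : ℝ) else 0) ∈ O2) :
    (¬ ∃ C, IsQuasiSection α β O2 C) ∧ (¬ ∃ C, IsTopSection α β O2 C) := by
  set w : ℕ → Fin 3 → ℝ := fun n i => Real.exp (n * min (-weight α β d i) 0)
  set q : ℕ → ℝ × ℝ := fun n => (n : ℝ) • d
  have hqw : ∀ n, act α β (q n) (w n) = fun i => Real.exp (n * min (weight α β d i) 0) := by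
    intro n
    ext i
    simp only [act_apply, q, w, map_smul, Pi.smul_apply, smul_eq_mul, ← Real.exp_add]
    congr 1
    rw [← mul_add, ← min_add_add_left, add_neg_cancel, add_zero, min_comm]
  have hw_lim : Tendsto w atTop (𝓝 fun i => if weight α β d i ≤ 0 then 1 else 0) :=
    tendsto_pi_nhds.2 fun i => by
      simpa only [neg_nonneg] using tendsto_exp_natCast_mul_min (-weight α β d i)
  have hqw_lim : Tendsto (fun n => act α β (q n) (w n)) atTop
      (𝓝 fun i => if 0 ≤ weight α β d i then 1 else 0) := by
    simp only [hqw]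
    exact tendsto_pi_nhds.2 fun i => tendsto_exp_natCast_mul_min (weight α β d i)
  have hq : Tendsto q atTop (cocompact (ℝ × ℝ)) :=
    (isClosedEmbedding_smul_left hd).tendsto_cocompact.comp
      (tendsto_natCast_atTop_atTop.mono_right atTop_le_cocompact)
  have hwO2 : ∀ n, w n ∈ O2 := fun n => mem_O2_of_forall_ne_zero fun i => (Real.exp_pos _).ne'
  have hqwO2 : ∀ n, act α β (q n) (w n) ∈ O2 := fun n =>
    mem_O2_of_forall_ne_zero fun i => by rw [hqw]; exact (Real.exp_pos _).ne'
  exact ⟨fun ⟨_, hC⟩ => not_isQuasiSection_of_tendsto hle hge hw_lim hqw_lim hq hC,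
    fun ⟨_, hC⟩ => not_isTopSection_of_tendsto hwO2 hqwO2 hle hge hw_lim hqw_lim hq hC⟩

theorem no_quasiSection_case_b_general
    (α β : ℝ) :
    (¬ ∃ C : Set (Fin 3 → ℝ), IsQuasiSection α β O2 C) ∧
    (¬ ∃ C : Set (Fin 3 → ℝ), IsTopSection α β O2 C) := by
  rcases le_or_gt β 0 with hβ | hβ
  · exact not_exists_section_O2_of_weight (0, 1) (by simp) (by simp [O2, weight, hβ])
      (by simp [O2, weight])
  rcases le_or_gt α 0 with hα | hα
  · exact not_exists_section_O2_of_weight (1, 0) (by simp) (by simp [O2, weight, hα])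
      (by simp [O2, weight])
  · exact not_exists_section_O2_of_weight (-β, α) (by simp [hα.ne'])
      (by simp [O2, weight, hβ.le, mul_comm α β]) (by simp [O2, weight, hα.le, mul_comm α β])

/-- For `H = {diag(e^s, e^t, e^{αs+βt})}` with `αβ ≠ 0` and at least
one of `α, β` positive, there is no topological quasi-section for the action of `H` on
`𝒪₂`; in particular there is no topological section. -/
theorem no_quasiSection_case_b
    (α β : ℝ) (hαβ : α * β ≠ 0) (hpos : 0 < α ∨ 0 < β) :
    (¬ ∃ C : Set (Fin 3 → ℝ), IsQuasiSection α β O2 C) ∧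
    (¬ ∃ C : Set (Fin 3 → ℝ), IsTopSection α β O2 C) :=
  no_quasiSection_case_b_general α β
end
end
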